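/- arXiv:2107.14188 — 4 statements merged into one kernel-verified Lean document; each statement's English description precedes it below -/
import Mathlib

section
/- For a proper ideal I in a commutative ring A, the asymptotic Samuel function satisfies ν̄_{I^r}(f) = (1/r) ν̄_I(f) for every f ∈ A and every positive integer r. -/
/-!
Since `(I ^ r) ^ m = I ^ (r * m)`, the order with respect to `I ^ r` is the floor of the order
with respect to `I` divided by `r`, so `r ν_{I^r}(g) ≤ ν_I(g) ≤ r ν_{I^r}(g) + (r - 1)`.
Taking `g = f ^ n` and dividing by `n`, the error term `(r - 1) / n` tends to `0` and does not
affect the limsup.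
-/

open Filter ENNReal

/-- The order `ν_I(f) = sup { m ∈ ℕ : f ∈ I^m }`, valued in `ℕ∞`. -/
noncomputable def nuI {A : Type*} [CommRing A] (I : Ideal A) (f : A) : ℕ∞ :=
  sSup {n : ℕ∞ | ∃ m : ℕ, n = m ∧ f ∈ I ^ m}

/-- The asymptotic Samuel function `ν̄_I(f) = lim_n ν_I(f^n)/n`, valued in `ℝ≥0∞`. -/
noncomputable def nubar {A : Type*} [CommRing A] (I : Ideal A) (f : A) : ℝ≥0∞ :=
  Filter.atTop.limsup fun n : ℕ => (nuI I (f ^ n) : ℝ≥0∞) / (n : ℝ≥0∞)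

open Topology

theorem ENat.mul_le_of_forall_natCast_le_iff {x y : ℕ∞} {r : ℕ} (hr : 0 < r)
    (h : ∀ m : ℕ, (m : ℕ∞) ≤ y ↔ ((r * m : ℕ) : ℕ∞) ≤ x) : r * y ≤ x := by
  cases y with
  | top =>
    refine ENat.forall_natCast_le_iff_le.1 fun m _ => le_trans ?_ ((h m).1 le_top)
    exact_mod_cast Nat.le_mul_of_pos_left m hr
  | coe k => exact_mod_cast (h k).1 le_rfl

theorem ENat.le_mul_add_of_forall_natCast_le_iff {x y : ℕ∞} {r : ℕ} (hr : 0 < r)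
    (h : ∀ m : ℕ, (m : ℕ∞) ≤ y ↔ ((r * m : ℕ) : ℕ∞) ≤ x) : x ≤ r * y + (r - 1 : ℕ) := by
  cases y with
  | top => simp [ENat.mul_top (by exact_mod_cast hr.ne' : (r : ℕ∞) ≠ 0)]
  | coe k =>
    have hx : x < ((r * (k + 1) : ℕ) : ℕ∞) := by
      rw [← not_le, ← h]; exact_mod_cast (by omega : ¬ k + 1 ≤ k)
    lift x to ℕ using hx.ne_top
    have hxk : x < r * k + r := by exact_mod_cast hx
    exact_mod_cast (by omega : x ≤ r * k + (r - 1))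

theorem ENNReal.limsup_eq_const_mul_of_le_of_le_add {ι : Type*} {l : Filter ι}
    {a b c : ι → ℝ≥0∞} {r : ℝ≥0∞} (hr : r ≠ ⊤) (hc : Tendsto c l (𝓝 0))
    (hlow : ∀ i, r * b i ≤ a i) (hup : ∀ i, a i ≤ r * b i + c i) :
    limsup a l = r * limsup b l := by
  rw [← ENNReal.limsup_const_mul_of_ne_top hr]
  refine le_antisymm ?_ (limsup_le_limsup (.of_forall hlow))
  calc limsup a l ≤ limsup ((fun i => r * b i) + c) l := limsup_le_limsup (.of_forall hup)
    _ = _ := ENNReal.limsup_add_of_right_tendsto_zero hc _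

section

variable {A : Type*} [CommRing A] (I : Ideal A) (f : A)

theorem natCast_le_nuI_iff {m : ℕ} : (m : ℕ∞) ≤ nuI I f ↔ f ∈ I ^ m := by
  refine ⟨fun h => ?_, fun h => le_sSup ⟨m, rfl, h⟩⟩
  by_contra hf
  cases m with
  | zero => simp at hf
  | succ n =>
    have hle : nuI I f ≤ n := sSup_le fun _ ⟨k, hk, hfk⟩ => hk ▸ by
      by_contra! hnk
      exact hf (Ideal.pow_le_pow_right (by exact_mod_cast Order.add_one_le_of_lt hnk) hfk)
    have := h.trans hle
    norm_cast at this
    omega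

theorem natCast_le_nuI_pow_iff (r m : ℕ) :
    (m : ℕ∞) ≤ nuI (I ^ r) f ↔ ((r * m : ℕ) : ℕ∞) ≤ nuI I f := by
  rw [natCast_le_nuI_iff, natCast_le_nuI_iff, pow_mul]

theorem natCast_mul_nuI_pow_le {r : ℕ} (hr : 0 < r) : (r : ℕ∞) * nuI (I ^ r) f ≤ nuI I f :=
  ENat.mul_le_of_forall_natCast_le_iff hr (natCast_le_nuI_pow_iff I f r)

theorem nuI_le_natCast_mul_nuI_pow_add {r : ℕ} (hr : 0 < r) :
    nuI I f ≤ r * nuI (I ^ r) f + (r - 1 : ℕ) :=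
  ENat.le_mul_add_of_forall_natCast_le_iff hr (natCast_le_nuI_pow_iff I f r)

end

theorem nubar_pow_ideal_general {A : Type*} [CommRing A] (I : Ideal A) (f : A)
    (r : ℕ) (hr : 0 < r) :
    nubar (I ^ r) f = nubar I f / (r : ℝ≥0∞) := by
  have hr0 : (r : ℝ≥0∞) ≠ 0 := by exact_mod_cast hr.ne'
  rw [ENNReal.eq_div_iff hr0 (natCast_ne_top r), nubar, nubar, eq_comm]
  refine ENNReal.limsup_eq_const_mul_of_le_of_le_add (natCast_ne_top r)
    (c := fun n : ℕ => ((r - 1 : ℕ) : ℝ≥0∞) / n) ?_ (fun n => ?_) (fun n => ?_)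
  · simpa [div_eq_mul_inv] using
      ENNReal.Tendsto.const_mul ENNReal.tendsto_inv_nat_nhds_zero (.inr (natCast_ne_top (r - 1)))
  · rw [← mul_div_assoc]
    gcongr
    exact_mod_cast ENat.toENNReal_le.2 (natCast_mul_nuI_pow_le I (f ^ n) hr)
  · rw [← mul_div_assoc, ← ENNReal.add_div]
    gcongr
    exact_mod_cast ENat.toENNReal_le.2 (nuI_le_natCast_mul_nuI_pow_add I (f ^ n) hr)

theorem nubar_pow_ideal {A : Type*} [CommRing A] (I : Ideal A) (hI : I ≠ ⊤) (f : A)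
    (r : ℕ) (hr : 0 < r) :
    nubar (I ^ r) f = nubar I f / (r : ℝ≥0∞) :=
  nubar_pow_ideal_general I f r hr
end

section
/- The asymptotic Samuel function ν̄_I of a proper ideal I in a commutative ring A is an order function: ν̄_I(f+g) ≥ min{ν̄_I(f), ν̄_I(g)}, ν̄_I(fg) ≥ ν̄_I(f) + ν̄_I(g), ν̄_I(0) = ∞, and ν̄_I(1) = 0. -/
/-!
`ν̄_I(f)` is the supremum of `a / n` over the pairs with `n ≠ 0` and `f ^ n ∈ I ^ a`: each such pair
bounds the limsup along the multiples of `n`, and conversely the limsup is approached by such ratios.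
For products, `f ^ n ∈ I ^ a` and `g ^ m ∈ I ^ b` give `(f * g) ^ (n * m) ∈ I ^ (a * m + b * n)`.
For sums, after passing to a common exponent, `f ^ n, g ^ n ∈ I ^ c` give
`(f + g) ^ (n * (k + 1)) ∈ I ^ (c * k)` by the binomial theorem, because
`⌊j / n⌋ + ⌊(N - j) / n⌋ ≥ ⌊N / n⌋ - 1`; letting `k → ∞` yields `c / n ≤ ν̄_I(f + g)`.
-/

open Filter ENNReal

lemma ENNReal.le_of_forall_mul_natCast_le_mul_add_one {a b : ℝ≥0∞}
    (h : ∀ k : ℕ, a * k ≤ b * (k + 1)) : a ≤ b := by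
  by_contra! hba
  obtain ⟨k, hk⟩ := ENNReal.exists_nat_mul_gt (tsub_pos_of_lt hba).ne' hba.ne_top
  have hk_le : (k : ℝ≥0∞) * (a - b) ≤ b := by
    rw [ENNReal.mul_sub fun _ _ => natCast_ne_top k, tsub_le_iff_right]
    calc (k : ℝ≥0∞) * a = a * k := mul_comm _ _
      _ ≤ b * (k + 1) := h k
      _ = b + k * b := by ring
  exact (hk.trans_le hk_le).false

lemma ENNReal.natCast_mul_div_natCast_mul_right (a n : ℕ) {m : ℕ} (hm : m ≠ 0) :
    ((a * m : ℕ) : ℝ≥0∞) / (n * m : ℕ) = a / n := by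
  push_cast
  exact ENNReal.mul_div_mul_right _ _ (by exact_mod_cast hm) (natCast_ne_top m)

section Ideal

variable {A : Type*} [CommSemiring A] {J : Ideal A} {f g : A} {n : ℕ}

lemma pow_mul_mem_pow_mul {a : ℕ} (h : f ^ n ∈ J ^ a) (m : ℕ) : f ^ (n * m) ∈ J ^ (a * m) := by
  rw [pow_mul, pow_mul]
  exact Ideal.pow_mem_pow h m

lemma pow_mem_pow_div (h : f ^ n ∈ J) (j : ℕ) : f ^ j ∈ J ^ (j / n) := by
  have hsplit : f ^ j = (f ^ n) ^ (j / n) * f ^ (j % n) := by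
    rw [← pow_mul, ← pow_add, Nat.div_add_mod]
  rw [hsplit]
  exact Ideal.mul_mem_right _ _ (Ideal.pow_mem_pow h _)

lemma add_pow_mem_pow_div_sub_one (hf : f ^ n ∈ J) (hg : g ^ n ∈ J) (N : ℕ) :
    (f + g) ^ N ∈ J ^ (N / n - 1) := by
  rw [add_pow]
  refine Ideal.sum_mem _ fun j hj => Ideal.mul_mem_right _ _ ?_
  have hjN : j + (N - j) = N := Nat.add_sub_cancel' (Nat.lt_succ_iff.1 (Finset.mem_range.1 hj))
  have hexp : N / n - 1 ≤ j / n + (N - j) / n := by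
    rw [Nat.sub_le_iff_le_add]
    simpa only [hjN] using Nat.add_div_le_div_add_div_add_one j (N - j) n
  refine Ideal.pow_le_pow_right hexp ?_
  rw [pow_add]
  exact Ideal.mul_mem_mul (pow_mem_pow_div hf j) (pow_mem_pow_div hg (N - j))

end Ideal

section Samuel

variable {A : Type*} [CommRing A] (I : Ideal A) {f g : A}

lemma natCast_le_nuI {m : ℕ} (h : f ∈ I ^ m) : (m : ℝ≥0∞) ≤ nuI I f :=
  ENat.toENNReal_le.2 (le_sSup ⟨m, rfl, h⟩ : (m : ℕ∞) ≤ nuI I f)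

lemma exists_pow_mem_of_lt_nuI {x : ℝ≥0∞} (h : x < nuI I f) : ∃ a : ℕ, f ∈ I ^ a ∧ x < a := by
  rw [← ENat.floor_lt, nuI, lt_sSup_iff] at h
  obtain ⟨_, ⟨a, rfl, ha⟩, hlt⟩ := h
  exact ⟨a, ha, by simpa using hlt⟩

lemma div_le_nubar {n a : ℕ} (hn : n ≠ 0) (h : f ^ n ∈ I ^ a) : (a : ℝ≥0∞) / n ≤ nubar I f := by
  refine le_limsup_of_frequently_le (frequently_atTop.2 fun N => ⟨n * (N + 1), ?_, ?_⟩)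
    isBounded_le_of_top
  · nlinarith [Nat.pos_of_ne_zero hn]
  · rw [← natCast_mul_div_natCast_mul_right a n N.succ_ne_zero]
    gcongr
    exact natCast_le_nuI I (pow_mul_mem_pow_mul h _)

lemma exists_pow_mem_of_lt_nubar {x : ℝ≥0∞} (hx : x < nubar I f) :
    ∃ n a : ℕ, n ≠ 0 ∧ f ^ n ∈ I ^ a ∧ x < a / n := by
  obtain ⟨n, hn, hlt⟩ :=
    frequently_atTop.1 (frequently_lt_of_lt_limsup (by isBoundedDefault) hx) 1
  have hn0 : (n : ℝ≥0∞) ≠ 0 := by simpa using Nat.one_le_iff_ne_zero.1 hn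
  rw [ENNReal.lt_div_iff_mul_lt (.inl hn0) (.inl (natCast_ne_top n))] at hlt
  obtain ⟨a, ha, hxa⟩ := exists_pow_mem_of_lt_nuI I hlt
  exact ⟨n, a, by simpa using hn0, ha,
    (ENNReal.lt_div_iff_mul_lt (.inl hn0) (.inl (natCast_ne_top n))).2 hxa⟩

theorem nubar_eq_biSup (f : A) :
    nubar I f = ⨆ p ∈ {p : ℕ × ℕ | p.1 ≠ 0 ∧ f ^ p.1 ∈ I ^ p.2}, (p.2 : ℝ≥0∞) / p.1 := by
  refine le_antisymm (le_of_forall_lt fun x hx => ?_) (iSup₂_le fun p hp => div_le_nubar I hp.1 hp.2)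
  obtain ⟨n, a, hn, h, hxa⟩ := exists_pow_mem_of_lt_nubar I hx
  exact hxa.trans_le (le_iSup₂_of_le (n, a) ⟨hn, h⟩ le_rfl)

lemma div_le_nubar_add {n c : ℕ} (hn : n ≠ 0) (hf : f ^ n ∈ I ^ c) (hg : g ^ n ∈ I ^ c) :
    (c : ℝ≥0∞) / n ≤ nubar I (f + g) := by
  have hn0 : (n : ℝ≥0∞) ≠ 0 := by exact_mod_cast hn
  rw [ENNReal.div_le_iff hn0 (natCast_ne_top n)]
  refine le_of_forall_mul_natCast_le_mul_add_one fun k => ?_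
  have hmem : (f + g) ^ (n * (k + 1)) ∈ I ^ (c * k) := by
    rw [pow_mul]
    simpa [Nat.mul_div_cancel_left _ (Nat.pos_of_ne_zero hn)] using
      add_pow_mem_pow_div_sub_one hf hg (n * (k + 1))
  have hratio := div_le_nubar I (by positivity) hmem
  rw [ENNReal.div_le_iff (by simpa using hn) (natCast_ne_top _)] at hratio
  calc (c : ℝ≥0∞) * k = ((c * k : ℕ) : ℝ≥0∞) := by push_cast; rfl
    _ ≤ _ := hratio
    _ = _ := by push_cast; ring

theorem min_nubar_le_nubar_add (f g : A) : min (nubar I f) (nubar I g) ≤ nubar I (f + g) := by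
  rw [nubar_eq_biSup I f, nubar_eq_biSup I g]
  refine biSup_inf_biSup.trans_le (iSup₂_le ?_)
  rintro ⟨⟨n, a⟩, ⟨m, b⟩⟩ ⟨⟨hn, hf⟩, ⟨hm, hg⟩⟩
  have hf' := pow_mul_mem_pow_mul hf m
  have hg' := pow_mul_mem_pow_mul hg n
  rw [mul_comm m n] at hg'
  rcases le_total (a * m) (b * n) with h | h
  · refine inf_le_left.trans ?_
    rw [← natCast_mul_div_natCast_mul_right a n hm]
    exact div_le_nubar_add I (by positivity) hf' (Ideal.pow_le_pow_right h hg')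
  · refine inf_le_right.trans ?_
    rw [← natCast_mul_div_natCast_mul_right b m hn, mul_comm m n]
    exact div_le_nubar_add I (by positivity) (Ideal.pow_le_pow_right h hf') hg'

theorem nubar_add_nubar_le_nubar_mul (f g : A) : nubar I f + nubar I g ≤ nubar I (f * g) := by
  rw [nubar_eq_biSup I f, nubar_eq_biSup I g]
  refine biSup_add_biSup_le ?nonempty_f ?nonempty_g ?_
  case nonempty_f | nonempty_g => exact ⟨(1, 0), one_ne_zero, by simp⟩
  rintro ⟨n, a⟩ ⟨hn, hf⟩ ⟨m, b⟩ ⟨hm, hg⟩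
  have hmem : (f * g) ^ (n * m) ∈ I ^ (a * m + b * n) := by
    rw [mul_pow, pow_add, mul_comm n m]
    exact Ideal.mul_mem_mul (mul_comm m n ▸ pow_mul_mem_pow_mul hf m) (pow_mul_mem_pow_mul hg n)
  calc (a : ℝ≥0∞) / n + b / m
      = ((a * m : ℕ) : ℝ≥0∞) / (n * m : ℕ) + ((b * n : ℕ) : ℝ≥0∞) / (n * m : ℕ) := by
        rw [natCast_mul_div_natCast_mul_right a n hm, mul_comm n m,
          natCast_mul_div_natCast_mul_right b m hn]
    _ = ((a * m + b * n : ℕ) : ℝ≥0∞) / (n * m : ℕ) := by rw [ENNReal.div_add_div_same, Nat.cast_add]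
    _ ≤ nubar I (f * g) := div_le_nubar I (by positivity) hmem

theorem nubar_zero : nubar I 0 = ⊤ := by
  refine top_le_iff.1 (ENNReal.iSup_natCast ▸ iSup_le fun a => ?_)
  simpa using div_le_nubar I one_ne_zero (by simp : (0 : A) ^ 1 ∈ I ^ a)

theorem nubar_one (hI : I ≠ ⊤) : nubar I 1 = 0 := by
  refine nonpos_iff_eq_zero.1 ((nubar_eq_biSup I 1).trans_le (iSup₂_le fun ⟨n, a⟩ ⟨_, h⟩ => ?_))
  obtain rfl : a = 0 := by
    by_contra ha
    exact hI ((Ideal.eq_top_iff_one I).2 (Ideal.pow_le_self ha (by simpa using h)))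
  simp

end Samuel

/-- The asymptotic Samuel function is an order function. -/
theorem nubar_isOrderFunction {A : Type*} [CommRing A] (I : Ideal A) (hI : I ≠ ⊤) :
    (∀ f g : A, min (nubar I f) (nubar I g) ≤ nubar I (f + g)) ∧
    (∀ f g : A, nubar I f + nubar I g ≤ nubar I (f * g)) ∧
    nubar I 0 = ⊤ ∧ nubar I 1 = 0 :=
  ⟨min_nubar_le_nubar_add I, nubar_add_nubar_le_nubar_mul I, nubar_zero I, nubar_one I hI⟩
end

section
/- Let (A, m, k) be a Noetherian local ring of dimension d with embedding dimension d + t, t > 0, which is in the extremal case, i.e., dim_k ker(λ_m) = t. Then m admits a reduction generated by d elements. -/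
open Filter ENNReal

open IsLocalRing

/-- The kernel of `λ_m : m/m² → m^{(≥1)}/m^{(>1)}`, i.e. the subspace of the cotangent
space consisting of classes of elements `f ∈ m` with `ν̄_m(f) > 1` (equivalently, whose
initial forms are nilpotent in `Gr_m(A)`).  The set of such classes is already a
subspace, so taking the span does not change it. -/
noncomputable def kerLambda (A : Type*) [CommRing A] [IsLocalRing A] :
    Submodule (ResidueField A) (CotangentSpace A) :=
  Submodule.span (ResidueField A)
    {x : CotangentSpace A | ∃ f, ∃ hf : f ∈ maximalIdeal A,
      x = (maximalIdeal A).toCotangent ⟨f, hf⟩ ∧ 1 < nubar (maximalIdeal A) f}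

/-!
Lift a basis of a complement of `ker λ_m` to `κ_1, …, κ_d ∈ m`. By Nakayama, `m` is generated by
the `κ_i` together with finitely many `δ` with `ν̄_m(δ) > 1`, hence with `δ^N ∈ m^{N+1}` for some
`N > 0`. Such a `δ` can be dropped from a reduction `a + (δ)` of `m`: iterating
`(a + (δ)) m^n = m^{n+1}` gives
`m^{n+N} ⊆ a m^{n+N-1} + δ^N m^n ⊆ a m^{n+N-1} + m·m^{n+N}`,
and Nakayama yields `a m^{n+N-1} = m^{n+N}`. Starting from the reduction `m` of itself and
dropping the `δ` one at a time leaves `(κ_1, …, κ_d)`.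
-/

lemma nuI_le_of_notMem_pow_succ {A : Type*} [CommRing A] {I : Ideal A} {f : A} {n : ℕ}
    (hf : f ∉ I ^ (n + 1)) : nuI I f ≤ n := by
  refine sSup_le ?_
  rintro _ ⟨k, rfl, hk⟩
  by_contra! hnk
  exact hf (Ideal.pow_le_pow_right (by exact_mod_cast hnk) hk)

lemma exists_pow_mem_pow_succ_of_one_lt_nubar {A : Type*} [CommRing A] {I : Ideal A} {f : A}
    (h : 1 < nubar I f) : ∃ n : ℕ, 0 < n ∧ f ^ n ∈ I ^ (n + 1) := by
  by_contra! hf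
  refine h.not_ge (Filter.limsup_le_of_le (by isBoundedDefault) ?_)
  filter_upwards [Filter.eventually_gt_atTop 0] with n hn
  have hle : (nuI I (f ^ n) : ℝ≥0∞) ≤ n := by
    exact_mod_cast nuI_le_of_notMem_pow_succ (hf n hn)
  calc (nuI I (f ^ n) : ℝ≥0∞) / n ≤ n / n := ENNReal.div_le_div_right hle _
    _ = 1 := ENNReal.div_self (by exact_mod_cast hn.ne') (ENNReal.natCast_ne_top n)

namespace Ideal

variable {A : Type*} [CommRing A]

def IsReduction (a m : Ideal A) : Prop :=
  ∃ n : ℕ, a * m ^ n = m ^ (n + 1)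

lemma isReduction_self (m : Ideal A) : m.IsReduction m :=
  ⟨0, by rw [pow_zero, mul_one, zero_add, pow_one]⟩

lemma pow_add_succ_le_sup_of_pow_succ_le {I D m : Ideal A} (hD : D ≤ m) {n : ℕ}
    (h : m ^ (n + 1) ≤ I * m ^ n ⊔ D * m ^ n) (k : ℕ) :
    m ^ (n + 1 + k) ≤ I * m ^ (n + k) ⊔ D ^ (k + 1) * m ^ n := by
  induction k with
  | zero => simpa using h
  | succ k ih =>
    have hDI : D ^ (k + 1) * (I * m ^ n) ≤ I * m ^ (n + (k + 1)) := by
      calc D ^ (k + 1) * (I * m ^ n) ≤ m ^ (k + 1) * (I * m ^ n) :=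
            mul_mono_left (pow_right_mono hD _)
        _ = I * m ^ (n + (k + 1)) := by ring
    calc m ^ (n + 1 + (k + 1)) = m ^ (n + 1 + k) * m := by ring
      _ ≤ (I * m ^ (n + k) ⊔ D ^ (k + 1) * m ^ n) * m := mul_mono_left ih
      _ = I * m ^ (n + (k + 1)) ⊔ D ^ (k + 1) * m ^ (n + 1) := by
          rw [sup_mul]; ring_nf
      _ ≤ I * m ^ (n + (k + 1)) ⊔ D ^ (k + 1) * (I * m ^ n ⊔ D * m ^ n) :=
          sup_le_sup_left (mul_mono_right h) _
      _ ≤ I * m ^ (n + (k + 1)) ⊔ D ^ (k + 1 + 1) * m ^ n := by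
          rw [mul_sup, ← mul_assoc (D ^ (k + 1)) D, ← pow_succ]
          exact sup_le le_sup_left (sup_le (hDI.trans le_sup_left) le_sup_right)

variable [IsNoetherianRing A] {I m : Ideal A}

lemma IsReduction.of_sup_span_singleton (hm : m ≤ jacobson ⊥) {δ : A} (hδ : δ ∈ m) {N : ℕ}
    (hN : 0 < N) (hδN : δ ^ N ∈ m ^ (N + 1)) (h : (I ⊔ span {δ}).IsReduction m) :
    I.IsReduction m := by
  obtain ⟨n, hn⟩ := h
  obtain ⟨k, rfl⟩ := Nat.exists_eq_add_one_of_ne_zero hN.ne'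
  have hδm : span {δ} ≤ m := (span_singleton_le_iff_mem _).mpr hδ
  have hle := pow_add_succ_le_sup_of_pow_succ_le hδm (hn.ge.trans_eq (sup_mul _ _ _)) k
  have hδk : span {δ} ^ (k + 1) * m ^ n ≤ m • m ^ (n + 1 + k) := by
    rw [span_singleton_pow, smul_eq_mul, ← pow_succ', show n + 1 + k + 1 = k + 1 + 1 + n by ring,
      pow_add m]
    exact mul_mono_left ((span_singleton_le_iff_mem _).mpr hδN)
  refine ⟨n + k, le_antisymm ?_ ?_⟩
  · calc I * m ^ (n + k) = I * m ^ n * m ^ k := by ring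
      _ ≤ m ^ (n + 1) * m ^ k := mul_mono_left (hn ▸ mul_mono_left le_sup_left)
      _ = m ^ (n + k + 1) := by ring
  · rw [show n + k + 1 = n + 1 + k by ring]
    exact Submodule.le_of_le_smul_of_le_jacobson_bot (IsNoetherian.noetherian _) hm
      (hle.trans (sup_le_sup_left hδk _))

lemma IsReduction.of_sup_span_finset (hm : m ≤ jacobson ⊥) (s : Finset A)
    (hs : ∀ δ ∈ s, δ ∈ m ∧ ∃ N, 0 < N ∧ δ ^ N ∈ m ^ (N + 1))
    (h : (I ⊔ span ↑s).IsReduction m) : I.IsReduction m := by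
  classical
  induction s using Finset.induction with
  | empty => simpa using h
  | insert δ s _ ih =>
    obtain ⟨hδ, N, hN, hδN⟩ := hs δ (Finset.mem_insert_self δ s)
    refine ih (fun x hx => hs x (Finset.mem_insert_of_mem hx)) ?_
    refine IsReduction.of_sup_span_singleton hm hδ hN hδN ?_
    rwa [Finset.coe_insert, span_insert, sup_comm (span {δ}), ← sup_assoc] at h

end Ideal

lemma kerLambda_eq_span_toCotangent (A : Type*) [CommRing A] [IsLocalRing A] :
    kerLambda A = Submodule.span (ResidueField A) ((maximalIdeal A).toCotangent ''
      {f : maximalIdeal A | 1 < nubar (maximalIdeal A) f}) := by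
  unfold kerLambda
  congr 1
  ext x
  constructor
  · rintro ⟨f, hf, rfl, hlt⟩
    exact ⟨⟨f, hf⟩, hlt, rfl⟩
  · rintro ⟨f, hlt, rfl⟩
    exact ⟨f, f.2, rfl, hlt⟩

lemma IsLocalRing.span_eq_maximalIdeal_of_span_toCotangent_eq_top {A : Type*} [CommRing A]
    [IsLocalRing A] [IsNoetherianRing A] {s : Set (maximalIdeal A)}
    (hs : Submodule.span (ResidueField A) ((maximalIdeal A).toCotangent '' s) = ⊤) :
    Ideal.span (Subtype.val '' s) = maximalIdeal A := by
  have := congrArg (Submodule.map (maximalIdeal A).subtype)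
    (CotangentSpace.span_image_eq_top_iff.mp hs)
  rwa [Submodule.map_span, Submodule.map_top, Submodule.range_subtype] at this

lemma span_sup_span_one_lt_nubar_eq_maximalIdeal {A : Type*} [CommRing A] [IsLocalRing A]
    [IsNoetherianRing A] {ι : Type*} (y : ι → maximalIdeal A)
    (hy : Submodule.span (ResidueField A) (Set.range ((maximalIdeal A).toCotangent ∘ y)) ⊔
      kerLambda A = ⊤) :
    Ideal.span (Set.range (Subtype.val ∘ y)) ⊔
      Ideal.span (Subtype.val '' {f : maximalIdeal A | 1 < nubar (maximalIdeal A) f}) =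
      maximalIdeal A := by
  rw [← Ideal.span_union, Set.range_comp, ← Set.image_union]
  refine IsLocalRing.span_eq_maximalIdeal_of_span_toCotangent_eq_top ?_
  rwa [Set.image_union, Submodule.span_union, ← kerLambda_eq_span_toCotangent, ← Set.range_comp]

theorem extremal_exists_reduction_general {A : Type*} [CommRing A] [IsLocalRing A]
    [IsNoetherianRing A] (d t : ℕ)
    (hemb : Module.finrank (ResidueField A) (CotangentSpace A) = d + t)
    (hext : Module.finrank (ResidueField A) (kerLambda A) = t) :
    ∃ κ : Fin d → A, (∀ i, κ i ∈ maximalIdeal A) ∧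
      ∃ n : ℕ, Ideal.span (Set.range κ) * (maximalIdeal A) ^ n = (maximalIdeal A) ^ (n + 1) := by
  obtain ⟨W, hW⟩ := Submodule.exists_isCompl (kerLambda A)
  have hWd : Module.finrank (ResidueField A) W = d := by
    have := Submodule.finrank_add_eq_of_isCompl hW
    omega
  let b := Module.finBasisOfFinrankEq _ _ hWd
  choose y hy using fun i => (maximalIdeal A).toCotangent_surjective (b i)
  have hyW :
      Submodule.span (ResidueField A) (Set.range ((maximalIdeal A).toCotangent ∘ y)) = W := by
    rw [show (maximalIdeal A).toCotangent ∘ y = W.subtype ∘ b from funext hy, Set.range_comp,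
      Submodule.span_image, b.span_eq, Submodule.map_top, Submodule.range_subtype]
  have hspan := span_sup_span_one_lt_nubar_eq_maximalIdeal y (hyW ▸ hW.symm.sup_eq_top)
  set T := Subtype.val '' {f : maximalIdeal A | 1 < nubar (maximalIdeal A) f}
  obtain ⟨T₀, hT₀, hT₀span⟩ := (Submodule.fg_span_iff_fg_span_finset_subset T).mp
    (IsNoetherian.noetherian (Ideal.span T))
  refine ⟨Subtype.val ∘ y, fun i => (y i).2,
    Ideal.IsReduction.of_sup_span_finset (maximalIdeal_le_jacobson _) T₀ ?_ ?_⟩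
  · rintro _ hδ
    obtain ⟨f, hf, rfl⟩ := hT₀ hδ
    exact ⟨f.2, exists_pow_mem_pow_succ_of_one_lt_nubar hf⟩
  · rw [← show Ideal.span T = Ideal.span T₀ from hT₀span, hspan]
    exact Ideal.isReduction_self _

/-- If `(A,m,k)` is Noetherian local of dimension `d`, embedding dimension `d + t`
with `t > 0`, and is in the extremal case (`dim_k ker(λ_m) = t`), then `m` admits a
reduction generated by `d` elements. -/
theorem extremal_exists_reduction {A : Type*} [CommRing A] [IsLocalRing A]
    [IsNoetherianRing A] (d t : ℕ) (ht : 0 < t) (hd : ringKrullDim A = d)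
    (hemb : Module.finrank (ResidueField A) (CotangentSpace A) = d + t)
    (hext : Module.finrank (ResidueField A) (kerLambda A) = t) :
    ∃ κ : Fin d → A, (∀ i, κ i ∈ maximalIdeal A) ∧
      ∃ n : ℕ, Ideal.span (Set.range κ) * (maximalIdeal A) ^ n = (maximalIdeal A) ^ (n + 1) :=
  extremal_exists_reduction_general d t hemb hext
end

section
/- Let A be a Noetherian ring, I ⊂ A a proper ideal not contained in any minimal prime, and v_1,…,v_s the Rees valuations of I. Then for every f ∈ A, ν̄_I(f) = min{ v_i(f)/v_i(I) : i = 1,…,s }. -/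
open Filter ENNReal

/-- `x` is integral over the ideal `J`: it satisfies an equation
`x^n + c_1 x^(n-1) + ... + c_n = 0` with `c_i ∈ J^i`. -/
def IsIntegralOverIdeal {A : Type*} [CommRing A] (J : Ideal A) (x : A) : Prop :=
  ∃ n : ℕ, 0 < n ∧ ∃ c : ℕ → A, (∀ i ∈ Finset.Icc 1 n, c i ∈ J ^ i) ∧
    x ^ n + ∑ i ∈ Finset.Icc 1 n, c i * x ^ (n - i) = 0

/-!
Membership `f ^ N ∈ I ^ m` makes `f ^ N` integral over `I ^ m`, so `ν̄_I(f)` is at most the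
supremum of the ratios `m / k` for which `f ^ k` is integral over `I ^ m`. Conversely, an equation
of integral dependence of `x = f ^ k` over `J = I ^ m` gives `x ^ (N + c) ∈ J ^ N` for all `N`, and
the ratios `m N / (k (N + c))` tend to `m / k`; hence `ν̄_I(f)` is exactly that supremum. By the
valuative description of the integral closures, `f ^ k` is integral over `I ^ m` iff
`m / k ≤ v_i(f) / v_i(I)` for all `i`, and the supremum of the fractions `m / k` below a number is
that number.
-/

open Topology

theorem ENNReal.tendsto_natCast_mul_div_natCast_mul_add (m k c : ℕ) (hk : 0 < k) :
    Tendsto (fun N : ℕ => ((m * N : ℕ) : ℝ≥0∞) / ((k * (N + c) : ℕ) : ℝ≥0∞)) atTop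
      (𝓝 ((m : ℝ≥0∞) / k)) := by
  have hreal : Tendsto (fun N : ℕ => ((0 : ℝ) + m * N) / (k * c + k * N)) atTop
      (𝓝 ((m : ℝ) / k)) :=
    tendsto_add_mul_div_add_mul_atTop_nhds _ _ _ (by exact_mod_cast hk.ne')
  have hk' : (0 : ℝ) < k := by exact_mod_cast hk
  refine ((ENNReal.tendsto_ofReal hreal).congr' ?_).trans ?_
  · filter_upwards [eventually_gt_atTop 0] with N hN
    rw [ENNReal.ofReal_div_of_pos (by positivity)]
    norm_cast
    rw [zero_add, ← mul_add, add_comm c]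
  · rw [ENNReal.ofReal_div_of_pos hk', ENNReal.ofReal_natCast, ENNReal.ofReal_natCast]

theorem ENNReal.exists_natCast_div_btwn {a b : ℝ≥0∞} (h : a < b) :
    ∃ m k : ℕ, 0 < k ∧ a < (m : ℝ≥0∞) / k ∧ (m : ℝ≥0∞) / k < b := by
  obtain ⟨q, hq, haq, hqb⟩ := ENNReal.lt_iff_exists_rat_btwn.1 h
  have hcast : (q : ℝ) = (q.num.toNat : ℝ) / q.den := by
    rw [Rat.cast_def, ← Int.toNat_of_nonneg (Rat.num_nonneg.2 hq)]
    rfl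
  have hq' : ((Real.toNNReal q : NNReal) : ℝ≥0∞) = (q.num.toNat : ℝ≥0∞) / q.den := by
    rw [← ENNReal.ofReal.eq_def, hcast, ENNReal.ofReal_div_of_pos (by exact_mod_cast q.pos),
      ENNReal.ofReal_natCast, ENNReal.ofReal_natCast]
  exact ⟨q.num.toNat, q.den, q.pos, hq' ▸ haq, hq' ▸ hqb⟩

theorem ENNReal.iSup_natCast_div_le (x : ℝ≥0∞) :
    ⨆ (k : ℕ) (_ : 0 < k) (m : ℕ) (_ : (m : ℝ≥0∞) / k ≤ x), (m : ℝ≥0∞) / k = x := by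
  refine le_antisymm (iSup₂_le fun _ _ => iSup₂_le fun _ h => h) (le_of_forall_lt fun y hy => ?_)
  obtain ⟨m, k, hk, hym, hmx⟩ := ENNReal.exists_natCast_div_btwn hy
  exact hym.trans_le (le_iSup₂_of_le k hk (le_iSup₂_of_le m hmx.le le_rfl))

theorem ENat.natCast_mul_le_natCast_mul_iff {a b : ℕ∞} (ha : a ≠ 0) (ha' : a ≠ ⊤) {m k : ℕ}
    (hk : 0 < k) : (m : ℕ∞) * a ≤ k * b ↔ (m : ℝ≥0∞) / k ≤ (b : ℝ≥0∞) / a := by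
  have ha₀ : (a : ℝ≥0∞) ≠ 0 := by simpa using ha
  have ha₁ : (a : ℝ≥0∞) ≠ ⊤ := by simpa using ha'
  rw [← ENat.toENNReal_le, ENat.toENNReal_mul, ENat.toENNReal_mul,
    ENNReal.le_div_iff_mul_le (.inl ha₀) (.inl ha₁), ← ENNReal.mul_div_right_comm,
    ENNReal.div_le_iff_le_mul (.inl (by exact_mod_cast hk.ne')) (.inl (ENNReal.natCast_ne_top k)),
    mul_comm (b : ℝ≥0∞)]
  norm_cast

theorem IsIntegralOverIdeal.of_mem {A : Type*} [CommRing A] {J : Ideal A} {x : A} (hx : x ∈ J) :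
    IsIntegralOverIdeal J x :=
  ⟨1, one_pos, fun _ => -x, fun i hi => by
    obtain rfl : i = 1 := by simpa using hi
    simpa using neg_mem hx, by simp⟩

theorem IsIntegralOverIdeal.exists_pow_add_mem_pow {A : Type*} [CommRing A] {J : Ideal A}
    {x : A} (hx : IsIntegralOverIdeal J x) : ∃ c : ℕ, ∀ N : ℕ, x ^ (N + c) ∈ J ^ N := by
  obtain ⟨n, hn, a, ha, heq⟩ := hx
  suffices key : ∀ t, x ^ t ∈ J ^ (t + 1 - n) from
    ⟨n - 1, fun N => by simpa [show N + (n - 1) + 1 - n = N by omega] using key (N + (n - 1))⟩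
  intro t
  induction t using Nat.strong_induction_on with
  | _ t ih =>
    rcases lt_or_ge t n with htn | htn
    · simp [show t + 1 - n = 0 by omega]
    have hxt : x ^ t = -∑ i ∈ Finset.Icc 1 n, a i * x ^ (t - i) := by
      rw [eq_neg_iff_add_eq_zero, ← Nat.sub_add_cancel htn, pow_add, ← mul_zero (x ^ (t - n)),
        ← heq, mul_add, Finset.mul_sum]
      refine congrArg _ (Finset.sum_congr rfl fun i hi => ?_)
      rw [Finset.mem_Icc] at hi
      rw [mul_left_comm, ← pow_add, show t - n + (n - i) = t - n + n - i by omega]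
    rw [hxt]
    refine neg_mem (Ideal.sum_mem _ fun i hi => ?_)
    rw [Finset.mem_Icc] at hi
    have hmem := Ideal.mul_mem_mul (ha i (Finset.mem_Icc.2 hi)) (ih (t - i) (by omega))
    rw [← pow_add] at hmem
    exact Ideal.pow_le_pow_right (by omega) hmem

theorem coe_nuI {A : Type*} [CommRing A] (I : Ideal A) (g : A) :
    (nuI I g : ℝ≥0∞) = ⨆ (m : ℕ) (_ : g ∈ I ^ m), (m : ℝ≥0∞) := by
  have : nuI I g = ⨆ (m : ℕ) (_ : g ∈ I ^ m), (m : ℕ∞) :=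
    le_antisymm (sSup_le fun _ ⟨m, hn, hm⟩ => hn ▸ le_iSup₂_of_le m hm le_rfl)
      (iSup₂_le fun m hm => le_sSup ⟨m, rfl, hm⟩)
  simp [this]

theorem natCast_div_le_nubar {A : Type*} [CommRing A] {I : Ideal A} {f : A} {m k : ℕ}
    (hk : 0 < k) (h : IsIntegralOverIdeal (I ^ m) (f ^ k)) : (m : ℝ≥0∞) / k ≤ nubar I f := by
  obtain ⟨c, hc⟩ := h.exists_pow_add_mem_pow
  have hmem : ∀ N, (m * N : ℕ) ≤ (nuI I (f ^ (k * (N + c))) : ℝ≥0∞) := fun N => by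
    rw [coe_nuI]
    refine le_iSup₂_of_le (m * N) ?_ le_rfl
    rw [pow_mul, pow_mul]
    exact hc N
  have hφ : Tendsto (fun N : ℕ => k * (N + c)) atTop atTop :=
    (tendsto_add_atTop_nat c).const_mul_atTop' hk
  calc (m : ℝ≥0∞) / k
      = limsup (fun N : ℕ => ((m * N : ℕ) : ℝ≥0∞) / ((k * (N + c) : ℕ) : ℝ≥0∞)) atTop :=
        (ENNReal.tendsto_natCast_mul_div_natCast_mul_add m k c hk).limsup_eq.symm
    _ ≤ limsup ((fun n : ℕ => (nuI I (f ^ n) : ℝ≥0∞) / n) ∘ fun N => k * (N + c)) atTop :=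
        limsup_le_limsup (Eventually.of_forall fun N => ENNReal.div_le_div_right (hmem N) _)
    _ ≤ nubar I f := hφ.limsup_comp_le_limsup

theorem nubar_eq_iSup_isIntegralOverIdeal {A : Type*} [CommRing A] (I : Ideal A) (f : A) :
    nubar I f =
      ⨆ (k : ℕ) (_ : 0 < k) (m : ℕ) (_ : IsIntegralOverIdeal (I ^ m) (f ^ k)), (m : ℝ≥0∞) / k := by
  refine le_antisymm (limsup_le_of_le (by isBoundedDefault) ?_) ?_
  · filter_upwards [eventually_gt_atTop 0] with N hN
    rw [coe_nuI, ENNReal.iSup_div]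
    refine iSup_le fun m => ?_
    rw [ENNReal.iSup_div]
    exact iSup_le fun hm => le_iSup₂_of_le N hN (le_iSup₂_of_le m (.of_mem hm) le_rfl)
  · exact iSup₂_le fun k hk => iSup₂_le fun m h => natCast_div_le_nubar hk h

theorem nubar_eq_min_reesValuations_general {A : Type*} [CommRing A]
    (I : Ideal A)
    (s : ℕ) (v : Fin s → A → ℕ∞)
    (hval : ∀ i, v i 0 = ⊤ ∧ v i 1 = 0 ∧ (∀ f g : A, v i (f * g) = v i f + v i g) ∧
      (∀ f g : A, min (v i f) (v i g) ≤ v i (f + g)))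
    (vI : Fin s → ℕ∞)
    (hvIpos : ∀ i, 0 < vI i ∧ vI i ≠ ⊤)
    (hRees : ∀ n : ℕ, ∀ f : A,
      IsIntegralOverIdeal (I ^ n) f ↔ ∀ i, (n : ℕ∞) * vI i ≤ v i f) :
    ∀ f : A, nubar I f = ⨅ i, (v i f : ℝ≥0∞) / (vI i : ℝ≥0∞) := by
  intro f
  have hpow (i : Fin s) (k : ℕ) : v i (f ^ k) = k * v i f := by
    obtain ⟨h0, h1, hmul, hadd⟩ := hval i
    simpa only [AddValuation.of_apply, nsmul_eq_mul] using
      (AddValuation.of (v i) h0 h1 hadd hmul).map_pow f k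
  have hcrit (k : ℕ) (hk : 0 < k) (m : ℕ) : IsIntegralOverIdeal (I ^ m) (f ^ k) ↔
      (m : ℝ≥0∞) / k ≤ ⨅ i, (v i f : ℝ≥0∞) / (vI i : ℝ≥0∞) := by
    simp only [hRees, hpow, le_iInf_iff]
    exact forall_congr' fun i =>
      ENat.natCast_mul_le_natCast_mul_iff (hvIpos i).1.ne' (hvIpos i).2 hk
  rw [nubar_eq_iSup_isIntegralOverIdeal]
  conv_lhs => enter [1, k, 1, hk, 1, m]; rw [hcrit k hk m]
  exact ENNReal.iSup_natCast_div_le _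

/-- Let `A` be a Noetherian ring and `I` a proper ideal not contained in any minimal
prime, and let `v_1, …, v_s` be the Rees valuations of `I`: a finite family of
(additive, `ℕ∞`-valued) valuations of `A`, with `v_i(I) := min {v_i(g) : g ∈ I}`
positive and finite, such that for every `n` the integral closure of `I^n` is
`∩_i {f : v_i(f) ≥ n · v_i(I)}`.  Then `ν̄_I(f) = min_i v_i(f)/v_i(I)` for every `f`. -/
theorem nubar_eq_min_reesValuations {A : Type*} [CommRing A] [IsNoetherianRing A]
    (I : Ideal A) (hI : I ≠ ⊤) (hmin : ∀ p ∈ minimalPrimes A, ¬ I ≤ p)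
    (s : ℕ) (hs : 0 < s) (v : Fin s → A → ℕ∞)
    (hval : ∀ i, v i 0 = ⊤ ∧ v i 1 = 0 ∧ (∀ f g : A, v i (f * g) = v i f + v i g) ∧
      (∀ f g : A, min (v i f) (v i g) ≤ v i (f + g)))
    (vI : Fin s → ℕ∞) (hvI : ∀ i, vI i = sInf {n : ℕ∞ | ∃ g ∈ I, n = v i g})
    (hvIpos : ∀ i, 0 < vI i ∧ vI i ≠ ⊤)
    (hRees : ∀ n : ℕ, ∀ f : A,
      IsIntegralOverIdeal (I ^ n) f ↔ ∀ i, (n : ℕ∞) * vI i ≤ v i f) :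
    ∀ f : A, nubar I f = ⨅ i, (v i f : ℝ≥0∞) / (vI i : ℝ≥0∞) :=
  nubar_eq_min_reesValuations_general I s v hval vI hvIpos hRees
end
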